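/- arXiv:2605.24979 — 2 statements merged into one kernel-verified Lean document; each statement's English description precedes it below -/
import Mathlib

section
/- Let G be a group, r : G → Q a function, and suppose r is an 'invariant of order less than n' in the sense that for all choices of elements w_0,...,w_n ∈ G and pairs (u_j, v_j) from a fixed set P of pairs of elements of G, the alternating sum over subsets s ⊆ {1,...,n} of (-1)^{|s|} r(w_0 t_1 w_1 ⋯ t_n w_n) vanishes (t_j = v_j if j ∈ s, else u_j). Let J be the two-sided ideal of Q[G] generated by {u - v : (u,v) ∈ P}. Then the linear extension f of r vanishes on J^n. -/
open MonoidAlgebra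

/-- `tsPow J n` is the `n`-th power of the two-sided ideal `J`:
`tsPow J 0 = ⊤` and `tsPow J (n+1)` is generated by products `a * b`
with `a ∈ J` and `b ∈ tsPow J n`; in particular `tsPow J 1 = J`. -/
def tsPow {A : Type*} [Ring A] (J : TwoSidedIdeal A) : ℕ → TwoSidedIdeal A
  | 0 => ⊤
  | n + 1 => TwoSidedIdeal.span {x | ∃ a ∈ J, ∃ b ∈ tsPow J n, x = a * b}

/-! `J ^ n` lies in the `ℚ`-span of the elementary products `g₀ (u₁ - v₁) g₁ ⋯ (uₙ - vₙ) gₙ` with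
`(uⱼ, vⱼ) ∈ P`: this span is a two-sided ideal, and multiplying it on the left by a generator
`u - v` of `J` lands in the next one. Expanding an elementary product, keeping the order of the
noncommuting factors, gives `∑ₛ (-1)^|s| g₀ t₁ g₁ ⋯ tₙ gₙ` with `tⱼ ∈ {uⱼ, vⱼ}`, and `f` maps this
to the alternating sum of values of `r` that the hypothesis says vanishes. -/

theorem List.prod_map_sub_eq_sum_powerset {R A ι : Type*} [CommRing R] [Ring A] [Algebra R A]
    [DecidableEq ι] (a b : ι → A) {l : List ι} (hl : l.Nodup) :
    (l.map fun i => a i - b i).prod =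
      ∑ s ∈ l.toFinset.powerset,
        (-1 : R) ^ s.card • (l.map fun i => if i ∈ s then b i else a i).prod := by
  induction l with
  | nil => simp
  | cons i l ih =>
    obtain ⟨hil, hl⟩ := List.nodup_cons.mp hl
    have hi : i ∉ l.toFinset := List.mem_toFinset.not.mpr hil
    have not_mem {s} (hs : s ∈ l.toFinset.powerset) : i ∉ s :=
      fun h => hi (Finset.mem_powerset.mp hs h)
    have map_insert (s : Finset ι) : (l.map fun j => if j ∈ insert i s then b j else a j) =
        l.map fun j => if j ∈ s then b j else a j :=
      List.map_congr_left fun j hj => by simp [ne_of_mem_of_not_mem hj hil]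
    rw [List.toFinset_cons, Finset.sum_powerset_insert hi, List.map_cons, List.prod_cons,
      ih hl, sub_mul, Finset.mul_sum, Finset.mul_sum, sub_eq_add_neg, ← Finset.sum_neg_distrib]
    congr 1 <;> refine Finset.sum_congr rfl fun s hs => ?_
    · rw [List.map_cons, List.prod_cons, if_neg (not_mem hs), mul_smul_comm]
    · rw [Finset.card_insert_of_notMem (not_mem hs), pow_succ, mul_neg_one, neg_smul,
        List.map_cons, List.prod_cons, if_pos (Finset.mem_insert_self i s), map_insert,
        mul_smul_comm]

theorem List.prod_ofFn_sub_eq_sum {R A : Type*} [CommRing R] [Ring A] [Algebra R A] {n : ℕ}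
    (a b : Fin n → A) :
    (List.ofFn fun j => a j - b j).prod =
      ∑ s : Finset (Fin n),
        (-1 : R) ^ s.card • (List.ofFn fun j => if j ∈ s then b j else a j).prod := by
  simp only [List.ofFn_eq_map]
  rw [List.prod_map_sub_eq_sum_powerset (R := R) a b (List.nodup_finRange n),
    List.toFinset_finRange, Finset.powerset_univ]

namespace MonoidAlgebra

section Span

variable {k G : Type*} [CommSemiring k] [Monoid G]

theorem mul_mem_span_of_forall_of_mul_mem {S : Set (MonoidAlgebra k G)}
    (hS : ∀ g, ∀ t ∈ S, of k G g * t ∈ S) (y : MonoidAlgebra k G) {x : MonoidAlgebra k G}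
    (hx : x ∈ Submodule.span k S) : y * x ∈ Submodule.span k S := by
  have of_mul (g : G) : of k G g * x ∈ Submodule.span k S :=
    (Submodule.span_le (p := (Submodule.span k S).comap (LinearMap.mulLeft k (of k G g)))).2
      (fun t ht => Submodule.subset_span (hS g t ht)) hx
  induction y using MonoidAlgebra.induction_linear with
  | zero => simp
  | add y z hy hz => simpa only [add_mul] using Submodule.add_mem _ hy hz
  | single g c => simpa only [← smul_of, smul_mul_assoc] using Submodule.smul_mem _ c (of_mul g)

theorem mul_mem_span_of_forall_mul_of_mem {S : Set (MonoidAlgebra k G)}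
    (hS : ∀ g, ∀ t ∈ S, t * of k G g ∈ S) (y : MonoidAlgebra k G) {x : MonoidAlgebra k G}
    (hx : x ∈ Submodule.span k S) : x * y ∈ Submodule.span k S := by
  have mul_of (g : G) : x * of k G g ∈ Submodule.span k S :=
    (Submodule.span_le (p := (Submodule.span k S).comap (LinearMap.mulRight k (of k G g)))).2
      (fun t ht => Submodule.subset_span (hS g t ht)) hx
  induction y using MonoidAlgebra.induction_linear with
  | zero => simp
  | add y z hy hz => simpa only [mul_add] using Submodule.add_mem _ hy hz
  | single g c => simpa only [← smul_of, mul_smul_comm] using Submodule.smul_mem _ c (mul_of g)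

end Span

section ElementaryProducts

variable {k G : Type*} [CommRing k] [Monoid G] (P : Set (G × G))

variable (k) in
noncomputable def diffIdeal : TwoSidedIdeal (MonoidAlgebra k G) :=
  TwoSidedIdeal.span {x | ∃ p ∈ P, x = of k G p.1 - of k G p.2}

variable (k) in
def elementaryProducts : ℕ → Set (MonoidAlgebra k G)
  | 0 => Set.range (of k G)
  | n + 1 => {x | ∃ g, ∃ p ∈ P, ∃ t ∈ elementaryProducts n,
      x = of k G g * (of k G p.1 - of k G p.2) * t}

theorem of_mul_mem_elementaryProducts {n : ℕ} (g : G) {t : MonoidAlgebra k G}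
    (ht : t ∈ elementaryProducts k P n) : of k G g * t ∈ elementaryProducts k P n := by
  cases n with
  | zero =>
    obtain ⟨h, rfl⟩ := ht
    exact ⟨g * h, map_mul _ _ _⟩
  | succ n =>
    obtain ⟨h, p, hp, t, ht, rfl⟩ := ht
    exact ⟨g * h, p, hp, t, ht, by simp only [map_mul, mul_assoc]⟩

theorem mul_of_mem_elementaryProducts {n : ℕ} (g : G) {t : MonoidAlgebra k G}
    (ht : t ∈ elementaryProducts k P n) : t * of k G g ∈ elementaryProducts k P n := by
  induction n generalizing t with
  | zero =>
    obtain ⟨h, rfl⟩ := ht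
    exact ⟨h * g, map_mul _ _ _⟩
  | succ n ih =>
    obtain ⟨h, p, hp, t, ht, rfl⟩ := ht
    exact ⟨h, p, hp, t * of k G g, ih ht, by simp only [mul_assoc]⟩

theorem mul_mem_span_elementaryProducts {n : ℕ} (y : MonoidAlgebra k G) {x : MonoidAlgebra k G}
    (hx : x ∈ Submodule.span k (elementaryProducts k P n)) :
    y * x ∈ Submodule.span k (elementaryProducts k P n) :=
  mul_mem_span_of_forall_of_mul_mem (fun g _ => of_mul_mem_elementaryProducts P g) y hx

theorem mem_span_elementaryProducts_mul {n : ℕ} (y : MonoidAlgebra k G) {x : MonoidAlgebra k G}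
    (hx : x ∈ Submodule.span k (elementaryProducts k P n)) :
    x * y ∈ Submodule.span k (elementaryProducts k P n) :=
  mul_mem_span_of_forall_mul_of_mem (fun g _ => mul_of_mem_elementaryProducts P g) y hx

theorem sub_mul_mem_span_elementaryProducts_succ {n : ℕ} {u v : G} (huv : (u, v) ∈ P)
    {x : MonoidAlgebra k G} (hx : x ∈ Submodule.span k (elementaryProducts k P n)) :
    (of k G u - of k G v) * x ∈ Submodule.span k (elementaryProducts k P (n + 1)) :=
  (Submodule.span_le (p := (Submodule.span k (elementaryProducts k P (n + 1))).comap
      (LinearMap.mulLeft k (of k G u - of k G v)))).2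
    (fun t ht => Submodule.subset_span ⟨1, (u, v), huv, t, ht, by rw [map_one, one_mul]; rfl⟩) hx

theorem mul_mem_span_elementaryProducts_succ {n : ℕ} {a b : MonoidAlgebra k G}
    (ha : a ∈ diffIdeal k P) (hb : b ∈ Submodule.span k (elementaryProducts k P n)) :
    a * b ∈ Submodule.span k (elementaryProducts k P (n + 1)) := by
  induction ha using TwoSidedIdeal.span_induction generalizing b with
  | mem _ h =>
    obtain ⟨p, hp, rfl⟩ := h
    exact sub_mul_mem_span_elementaryProducts_succ P hp hb
  | zero => simp
  | add x y _ _ hx hy => simpa only [add_mul] using Submodule.add_mem _ (hx hb) (hy hb)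
  | neg x _ hx => simpa only [neg_mul] using Submodule.neg_mem _ (hx hb)
  | left_absorb y x _ hx =>
    simpa only [mul_assoc] using mul_mem_span_elementaryProducts P y (hx hb)
  | right_absorb y x _ hx =>
    simpa only [mul_assoc] using hx (mul_mem_span_elementaryProducts P y hb)

theorem mem_span_elementaryProducts_of_mem_tsPow {n : ℕ} {x : MonoidAlgebra k G}
    (hx : x ∈ tsPow (diffIdeal k P) n) : x ∈ Submodule.span k (elementaryProducts k P n) := by
  induction n generalizing x with
  | zero =>
    have one_mem : of k G 1 ∈ Submodule.span k (elementaryProducts k P 0) :=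
      Submodule.subset_span ⟨1, rfl⟩
    simpa only [map_one, mul_one] using mul_mem_span_elementaryProducts P x one_mem
  | succ n ih =>
    induction hx using TwoSidedIdeal.span_induction with
    | mem _ h =>
      obtain ⟨a, ha, b, hb, rfl⟩ := h
      exact mul_mem_span_elementaryProducts_succ P ha (ih hb)
    | zero => simp
    | add _ _ _ _ hx hy => exact Submodule.add_mem _ hx hy
    | neg _ _ hx => exact Submodule.neg_mem _ hx
    | left_absorb y _ _ hx => exact mul_mem_span_elementaryProducts P y hx
    | right_absorb y _ _ hx => exact mem_span_elementaryProducts_mul P y hx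

theorem exists_eq_of_mem_elementaryProducts {n : ℕ} {t : MonoidAlgebra k G}
    (ht : t ∈ elementaryProducts k P n) :
    ∃ (w : Fin (n + 1) → G) (q : Fin n → G × G), (∀ j, q j ∈ P) ∧
      t = of k G (w 0) * (List.ofFn fun j : Fin n =>
        (of k G (q j).1 - of k G (q j).2) * of k G (w j.succ)).prod := by
  induction n generalizing t with
  | zero =>
    obtain ⟨g, rfl⟩ := ht
    exact ⟨fun _ => g, Fin.elim0, fun j => j.elim0, by simp⟩
  | succ n ih =>
    obtain ⟨g, p, hp, t, ht, rfl⟩ := ht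
    obtain ⟨w, q, hq, rfl⟩ := ih ht
    refine ⟨Fin.cons g w, Fin.cons p q, Fin.cases hp hq, ?_⟩
    simp only [List.ofFn_succ, List.prod_cons, Fin.cons_zero, Fin.cons_succ, mul_assoc]

theorem of_mul_prod_ofFn_sub_mul_of_eq_sum {n : ℕ} (w : Fin (n + 1) → G) (q : Fin n → G × G) :
    of k G (w 0) * (List.ofFn fun j : Fin n =>
        (of k G (q j).1 - of k G (q j).2) * of k G (w j.succ)).prod =
      ∑ s : Finset (Fin n), (-1 : k) ^ s.card • of k G (w 0 * (List.ofFn fun j : Fin n =>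
        (if j ∈ s then (q j).2 else (q j).1) * w j.succ).prod) := by
  simp only [sub_mul, ← map_mul]
  rw [List.prod_ofFn_sub_eq_sum (R := k), Finset.mul_sum]
  refine Finset.sum_congr rfl fun s _ => ?_
  rw [mul_smul_comm, map_mul, map_list_prod, List.map_ofFn]
  simp only [Function.comp_def, ite_mul, apply_ite (of k G)]

end ElementaryProducts

end MonoidAlgebra

theorem order_lt_n_vanishes_on_pow {G : Type*} [Group G] (n : ℕ)
    (P : Set (G × G)) (r : G → ℚ)
    (f : MonoidAlgebra ℚ G →ₗ[ℚ] ℚ) (hf : ∀ g : G, f (of ℚ G g) = r g)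
    (hr : ∀ (w : Fin (n + 1) → G) (q : Fin n → G × G), (∀ j, q j ∈ P) →
      ∑ s : Finset (Fin n), ((-1 : ℚ) ^ s.card) *
        r (w 0 * (List.ofFn fun j : Fin n =>
          (if j ∈ s then (q j).2 else (q j).1) * w j.succ).prod) = 0) :
    ∀ x ∈ tsPow
        (TwoSidedIdeal.span
          {x : MonoidAlgebra ℚ G | ∃ p ∈ P, x = of ℚ G p.1 - of ℚ G p.2}) n,
      f x = 0 := by
  have span_le_ker : Submodule.span ℚ (elementaryProducts ℚ P n) ≤ LinearMap.ker f := by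
    rw [Submodule.span_le]
    intro t ht
    obtain ⟨w, q, hq, rfl⟩ := exists_eq_of_mem_elementaryProducts P ht
    simpa only [SetLike.mem_coe, LinearMap.mem_ker, of_mul_prod_ofFn_sub_mul_of_eq_sum, map_sum,
      map_smul, hf, smul_eq_mul] using hr w q hq
  exact fun x hx => span_le_ker (mem_span_elementaryProducts_of_mem_tsPow P hx)
end

section
/- Combining the above: let G be a group, P a set of pairs of elements of G, J ⊆ Q[G] the ideal generated by {u - v : (u,v) ∈ P}, H the subgroup of G generated by {u v^{-1} : (u,v) ∈ P}, and r : G → Q a function whose linear extension vanishes on J^n. Then for every p ∈ LCS_n(H) and every x ∈ G, r(p x) = r(x). -/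
open MonoidAlgebra

/-- Lower central series of a subgroup, indexed so that `LCS H 0 = LCS₁(H) = H`
and `LCS H n = LCS_{n+1}(H) = [H, LCS_n(H)]`. -/
def LCS {G : Type*} [Group G] (H : Subgroup G) : ℕ → Subgroup G
  | 0 => H
  | n + 1 => ⁅H, LCS H n⁆

/-!
The subgroup `D(I) = {g | g - 1 ∈ I}` attached to an ideal `I` of the group algebra satisfies
`[D(J), D(J^n)] ≤ D(J^(n+1))`, because `[g, h] - 1 = ((g-1)(h-1) - (h-1)(g-1)) g⁻¹ h⁻¹`.
The generators `u v⁻¹` of `H` lie in `D(J)`, so by induction `LCS_n(H) ≤ D(J^n)`. For `p` in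
there, `p x - x = (p - 1) x ∈ J^n`, on which the linear extension of `r` vanishes.
-/

section tsPow

variable {A : Type*} [Ring A] (J : TwoSidedIdeal A)

lemma mul_mem_tsPow_succ {n : ℕ} {a b : A} (ha : a ∈ J) (hb : b ∈ tsPow J n) :
    a * b ∈ tsPow J (n + 1) :=
  TwoSidedIdeal.subset_span ⟨a, ha, b, hb, rfl⟩

lemma le_tsPow_one : J ≤ tsPow J 1 := fun a ha => by
  simpa using mul_mem_tsPow_succ J (n := 0) ha (TwoSidedIdeal.mem_top (x := 1))

lemma tsPow_succ_le (n : ℕ) : tsPow J (n + 1) ≤ tsPow J n :=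
  TwoSidedIdeal.span_le.2 <| by
    rintro _ ⟨a, -, b, hb, rfl⟩
    exact (tsPow J n).mul_mem_left a b hb

lemma tsPow_antitone : Antitone (tsPow J) :=
  antitone_nat_of_succ_le (tsPow_succ_le J)

lemma mul_mem_tsPow_succ' {n : ℕ} {x c : A} (hx : x ∈ tsPow J n) (hc : c ∈ J) :
    x * c ∈ tsPow J (n + 1) := by
  induction n generalizing x c with
  | zero => exact le_tsPow_one J (J.mul_mem_left x c hc)
  | succ n ih =>
    induction hx using TwoSidedIdeal.span_induction generalizing c with
    | mem x hx =>
      obtain ⟨a, ha, b, hb, rfl⟩ := hx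
      rw [mul_assoc]
      exact mul_mem_tsPow_succ J ha (ih hb hc)
    | zero => simp [(tsPow J (n + 2)).zero_mem]
    | add x y _ _ hx hy => simpa [add_mul] using (tsPow J (n + 2)).add_mem (hx hc) (hy hc)
    | neg x _ hx => simpa [neg_mul] using (tsPow J (n + 2)).neg_mem (hx hc)
    | left_absorb a x _ hx =>
      rw [mul_assoc]
      exact (tsPow J (n + 2)).mul_mem_left a _ (hx hc)
    | right_absorb b x _ hx =>
      rw [mul_assoc]
      exact hx (J.mul_mem_left b c hc)

end tsPow

section congrSubgroup

variable {G A : Type*} [Group G] [Ring A] (φ : G →* A)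

def congrSubgroup (I : TwoSidedIdeal A) : Subgroup G where
  carrier := {g | φ g - 1 ∈ I}
  one_mem' := by simp [I.zero_mem]
  mul_mem' {g h} hg hh := by
    have e : φ (g * h) - 1 = (φ g - 1) * φ h + (φ h - 1) := by rw [map_mul]; noncomm_ring
    simpa only [Set.mem_ofPred_eq, e] using I.add_mem (I.mul_mem_right _ _ hg) hh
  inv_mem' {g} hg := by
    have e : φ g⁻¹ - 1 = -((φ g - 1) * φ g⁻¹) := by
      rw [sub_mul, ← map_mul, mul_inv_cancel, map_one]; noncomm_ring
    simpa only [Set.mem_ofPred_eq, e] using I.neg_mem (I.mul_mem_right _ _ hg)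

variable {φ}

lemma mem_congrSubgroup {I : TwoSidedIdeal A} {g : G} :
    g ∈ congrSubgroup φ I ↔ φ g - 1 ∈ I :=
  Iff.rfl

lemma congrSubgroup_mono {I I' : TwoSidedIdeal A} (h : I ≤ I') :
    congrSubgroup φ I ≤ congrSubgroup φ I' :=
  fun _ hg => h hg

lemma mul_inv_mem_congrSubgroup {I : TwoSidedIdeal A} {u v : G} (h : φ u - φ v ∈ I) :
    u * v⁻¹ ∈ congrSubgroup φ I := by
  have e : φ (u * v⁻¹) - 1 = (φ u - φ v) * φ v⁻¹ := by
    rw [map_mul, sub_mul, ← map_mul φ v, mul_inv_cancel, map_one]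
  rw [mem_congrSubgroup, e]
  exact I.mul_mem_right _ _ h

open scoped commutatorElement in
lemma map_commutatorElement_sub_one (g h : G) :
    φ ⁅g, h⁆ - 1 = ((φ g - 1) * (φ h - 1) - (φ h - 1) * (φ g - 1)) * φ g⁻¹ * φ h⁻¹ := by
  have e : (φ g - 1) * (φ h - 1) - (φ h - 1) * (φ g - 1) = φ g * φ h - φ h * φ g := by
    noncomm_ring
  have hg : φ g * φ g⁻¹ = 1 := by rw [← map_mul, mul_inv_cancel, map_one]
  have hh : φ h * φ h⁻¹ = 1 := by rw [← map_mul, mul_inv_cancel, map_one]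
  rw [e, sub_mul, sub_mul, mul_assoc (φ h) (φ g), hg, mul_one, hh, commutatorElement_def,
    map_mul, map_mul, map_mul]

lemma commutator_congrSubgroup_tsPow_le (J : TwoSidedIdeal A) (n : ℕ) :
    ⁅congrSubgroup φ J, congrSubgroup φ (tsPow J n)⁆ ≤ congrSubgroup φ (tsPow J (n + 1)) := by
  rw [Subgroup.commutator_le]
  intro g hg h hh
  rw [mem_congrSubgroup, map_commutatorElement_sub_one]
  refine TwoSidedIdeal.mul_mem_right _ _ _ (TwoSidedIdeal.mul_mem_right _ _ _ ?_)
  exact TwoSidedIdeal.sub_mem _ (mul_mem_tsPow_succ J hg hh) (mul_mem_tsPow_succ' J hh hg)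

lemma LCS_le_congrSubgroup_tsPow {J : TwoSidedIdeal A} {H : Subgroup G}
    (hH : H ≤ congrSubgroup φ J) (k : ℕ) : LCS H k ≤ congrSubgroup φ (tsPow J (k + 1)) := by
  induction k with
  | zero => exact hH.trans (congrSubgroup_mono (le_tsPow_one J))
  | succ k ih =>
    change ⁅H, LCS H k⁆ ≤ _
    exact (Subgroup.commutator_mono hH ih).trans (commutator_congrSubgroup_tsPow_le J (k + 1))

end congrSubgroup

theorem invariant_unchanged_by_lcs_general {G : Type*} [Group G]
    (P : Set (G × G)) (r : G → ℚ)
    (f : MonoidAlgebra ℚ G →ₗ[ℚ] ℚ) (hf : ∀ g : G, f (of ℚ G g) = r g)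
    (n : ℕ)
    (hvanish : ∀ x ∈ tsPow
        (TwoSidedIdeal.span
          {x : MonoidAlgebra ℚ G | ∃ p ∈ P, x = of ℚ G p.1 - of ℚ G p.2}) n,
      f x = 0) :
    ∀ p ∈ LCS (Subgroup.closure {g : G | ∃ q ∈ P, g = q.1 * q.2⁻¹}) (n - 1),
      ∀ x : G, r (p * x) = r x := by
  set J := TwoSidedIdeal.span {x : MonoidAlgebra ℚ G | ∃ p ∈ P, x = of ℚ G p.1 - of ℚ G p.2}
  have hH : Subgroup.closure {g : G | ∃ q ∈ P, g = q.1 * q.2⁻¹} ≤ congrSubgroup (of ℚ G) J := by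
    rw [Subgroup.closure_le]
    rintro _ ⟨q, hq, rfl⟩
    exact mul_inv_mem_congrSubgroup (TwoSidedIdeal.subset_span ⟨q, hq, rfl⟩)
  intro p hp x
  have hp' : of ℚ G p - 1 ∈ tsPow J n :=
    tsPow_antitone J (by omega : n ≤ n - 1 + 1) (LCS_le_congrSubgroup_tsPow hH (n - 1) hp)
  have h0 := hvanish _ ((tsPow J n).mul_mem_right _ (of ℚ G x) hp')
  rwa [sub_mul, one_mul, ← map_mul, map_sub, hf, hf, sub_eq_zero] at h0

theorem invariant_unchanged_by_lcs {G : Type*} [Group G]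
    (P : Set (G × G)) (r : G → ℚ)
    (f : MonoidAlgebra ℚ G →ₗ[ℚ] ℚ) (hf : ∀ g : G, f (of ℚ G g) = r g)
    (n : ℕ) (hn : 1 ≤ n)
    (hvanish : ∀ x ∈ tsPow
        (TwoSidedIdeal.span
          {x : MonoidAlgebra ℚ G | ∃ p ∈ P, x = of ℚ G p.1 - of ℚ G p.2}) n,
      f x = 0) :
    ∀ p ∈ LCS (Subgroup.closure {g : G | ∃ q ∈ P, g = q.1 * q.2⁻¹}) (n - 1),
      ∀ x : G, r (p * x) = r x :=
  invariant_unchanged_by_lcs_general P r f hf n hvanish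
end
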